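/- Let d > 0 and N ≥ d be integers and let c, m be positive integers with c < m. Then both ⌊n/d⌋ = ⌊(c·n + c)/m⌋ and n mod d = ⌊(((c·n + c) mod m)·d)/m⌋ hold for all integers n with 0 ≤ n ≤ N if and only if (1 - 1/(N+1))·(1/d) ≤ c/m < 1/d. -/

import Mathlib

/-!
Write `a = c (n + 1)`. Splitting `a d / m` through `a = m ⌊a / m⌋ + (a mod m)` gives
`⌊a d / m⌋ = d ⌊a / m⌋ + ⌊(a mod m) d / m⌋` with the last term `< d`, so the two equations say
exactly that `n = ⌊a d / m⌋`, i.e. `n m ≤ c (n + 1) d < (n + 1) m`. The right inequality is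
`c d < m`; the left one is `n / (n + 1) ≤ c d / m`, and since `n / (n + 1)` increases with `n`
it holds for all `n ≤ N` as soon as it holds for `n = N`.
-/

namespace Nat

theorem mul_div_eq_mul_div_add_mod_mul_div {m : ℕ} (hm : 0 < m) (a d : ℕ) :
    a * d / m = d * (a / m) + a % m * d / m := by
  have hsplit : a * d = a % m * d + m * (d * (a / m)) := by
    conv_lhs => rw [← Nat.mod_add_div a m]
    ring
  rw [hsplit, Nat.add_mul_div_left _ _ hm, Nat.add_comm]

theorem mod_mul_div_lt {m d : ℕ} (hm : 0 < m) (hd : 0 < d) (a : ℕ) : a % m * d / m < d := by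
  rw [Nat.div_lt_iff_lt_mul hm, mul_comm d]
  exact Nat.mul_lt_mul_of_pos_right (Nat.mod_lt a hm) hd

theorem div_eq_div_and_mod_eq_mod_mul_div_iff {m d : ℕ} (hm : 0 < m) (hd : 0 < d) (n a : ℕ) :
    n / d = a / m ∧ n % d = a % m * d / m ↔ n = a * d / m := by
  rw [Nat.div_mod_unique hd, mul_div_eq_mul_div_add_mod_mul_div hm a d, Nat.add_comm, eq_comm]
  simp only [mod_mul_div_lt hm hd, and_true]

theorem eq_div_iff_mul_le_and_lt_succ_mul {m : ℕ} (hm : 0 < m) (n a : ℕ) :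
    n = a / m ↔ n * m ≤ a ∧ a < (n + 1) * m := by
  rw [le_antisymm_iff, and_comm, Nat.le_div_iff_mul_le hm, ← Nat.lt_succ_iff,
    Nat.div_lt_iff_lt_mul hm, and_comm]

end Nat

theorem succ_mul_mul_div_eq_iff {m : ℕ} (hm : 0 < m) (n c d : ℕ) :
    n = (n + 1) * (c * d) / m ↔ n * m ≤ (n + 1) * (c * d) ∧ c * d < m := by
  rw [Nat.eq_div_iff_mul_le_and_lt_succ_mul hm, Nat.mul_lt_mul_left n.succ_pos]

theorem mul_le_succ_mul_of_le {N x y n : ℕ} (h : N * x ≤ (N + 1) * y) (hn : n ≤ N) :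
    n * x ≤ (n + 1) * y := by
  have hsucc : n * (N + 1) ≤ (n + 1) * N := by nlinarith
  refine Nat.le_of_mul_le_mul_right (c := N + 1) ?_ N.succ_pos
  calc n * x * (N + 1) = n * (N + 1) * x := by ring
    _ ≤ (n + 1) * N * x := Nat.mul_le_mul_right x hsucc
    _ = (n + 1) * (N * x) := by ring
    _ ≤ (n + 1) * ((N + 1) * y) := Nat.mul_le_mul_left _ h
    _ = (n + 1) * y * (N + 1) := by ring

theorem one_sub_inv_succ_mul_inv_le_div_iff {N c d m : ℕ} (hd : 0 < d) (hm : 0 < m) :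
    (1 - 1 / ((N : ℚ) + 1)) * (1 / d) ≤ (c : ℚ) / m ↔ N * m ≤ (N + 1) * (c * d) := by
  have hlhs : (1 - 1 / ((N : ℚ) + 1)) * (1 / d) = N / ((N + 1) * d) := by field_simp; ring
  rw [hlhs, div_le_div_iff₀ (by positivity) (by exact_mod_cast hm),
    show (c : ℚ) * ((N + 1) * d) = (N + 1) * (c * d) by ring]
  exact_mod_cast Iff.rfl

theorem div_lt_one_div_iff {c d m : ℕ} (hd : 0 < d) (hm : 0 < m) :
    (c : ℚ) / m < 1 / d ↔ c * d < m := by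
  rw [div_lt_div_iff₀ (by exact_mod_cast hm) (by exact_mod_cast hd), one_mul]
  exact_mod_cast Iff.rfl

theorem stmt_7_general (d N c m : ℕ) (hd : 0 < d) (hcm : c < m) :
    (∀ n : ℕ, n ≤ N →
        n / d = (c * n + c) / m ∧ n % d = (((c * n + c) % m) * d) / m) ↔
      ((1 - 1 / ((N : ℚ) + 1)) * (1 / d) ≤ (c : ℚ) / m ∧ (c : ℚ) / m < 1 / d) := by
  have hm : 0 < m := by omega
  have hpoint (n : ℕ) :
      (n / d = (c * n + c) / m ∧ n % d = (c * n + c) % m * d / m) ↔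
        n * m ≤ (n + 1) * (c * d) ∧ c * d < m := by
    rw [Nat.div_eq_div_and_mod_eq_mod_mul_div_iff hm hd,
      show (c * n + c) * d = (n + 1) * (c * d) by ring, succ_mul_mul_div_eq_iff hm]
  simp only [hpoint, one_sub_inv_succ_mul_inv_le_div_iff hd hm, div_lt_one_div_iff hd hm]
  constructor
  · exact fun h ↦ h N le_rfl
  · exact fun ⟨hN, hcd⟩ n hn ↦ ⟨mul_le_succ_mul_of_le hN hn, hcd⟩

theorem stmt_7 (d N c m : ℕ) (hd : 0 < d) (hN : d ≤ N) (hc : 0 < c) (hcm : c < m) :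
    (∀ n : ℕ, n ≤ N →
        n / d = (c * n + c) / m ∧ n % d = (((c * n + c) % m) * d) / m) ↔
      ((1 - 1 / ((N : ℚ) + 1)) * (1 / d) ≤ (c : ℚ) / m ∧ (c : ℚ) / m < 1 / d) :=
  stmt_7_general d N c m hd hcm
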